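/- arXiv:2207.13072 — 2 statements merged into one kernel-verified Lean document; each statement's English description precedes it below -/
import Mathlib

section
/- Let G be a group, t ∈ G, and d an integer with d ≠ 1 and d ≠ -1, such that g^d = t g t⁻¹ for every g ∈ G. Then G has finite exponent: there exists a positive integer N such that g^N = e for every g ∈ G. -/
theorem stmt_10 {G : Type*} [Group G] (t : G) (d : ℤ) (hd1 : d ≠ 1) (hdm1 : d ≠ -1)
    (h : ∀ g : G, g ^ d = t * g * t⁻¹) :
    ∃ N : ℕ, 0 < N ∧ ∀ g : G, g ^ N = 1 := by
  -- t has finite order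
  have ht : t ^ (d - 1) = 1 := by
    have := h t
    rw [mul_inv_cancel_right] at this
    rw [zpow_sub, this, zpow_one, mul_inv_cancel]
  have htfin : IsOfFinOrder t :=
    isOfFinOrder_iff_zpow_eq_one.mpr ⟨d - 1, sub_ne_zero.mpr hd1, ht⟩
  set n := orderOf t with hn
  have hnpos : 0 < n := htfin.orderOf_pos
  -- key induction
  have key : ∀ (k : ℕ) (g : G), g ^ (d ^ k) = t ^ k * g * (t ^ k)⁻¹ := by
    intro k
    induction k with
    | zero => simp
    | succ k ih =>
      intro g
      have : g ^ (d ^ (k+1)) = (g ^ (d ^ k)) ^ d := by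
        rw [← zpow_mul, ← pow_succ]
      rw [this, ih, h (t ^ k * g * (t ^ k)⁻¹)]
      group
  have hkey : ∀ g : G, g ^ (d ^ n - 1) = 1 := by
    intro g
    have := key n g
    rw [pow_orderOf_eq_one] at this
    simp only [inv_one, one_mul, mul_one] at this
    rw [zpow_sub, this, zpow_one, mul_inv_cancel]
  have hdn : d ^ n - 1 ≠ 0 := by
    intro hc
    have hdn1 : d ^ n = 1 := by linarith
    rcases eq_or_ne d 0 with rfl | hd0
    · rw [zero_pow hnpos.ne'] at hdn1; exact absurd hdn1 (by norm_num)
    · have h2 : (2:ℤ) ≤ |d| := by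
        rcases lt_or_ge d 0 with hlt | hle
        · rw [abs_of_neg hlt]; omega
        · rw [abs_of_nonneg hle]; omega
      have : (2:ℤ) ≤ |d ^ n| := by
        rw [abs_pow]
        calc (2:ℤ) ≤ |d| := h2
          _ ≤ |d| ^ n := le_self_pow₀ (by omega) hnpos.ne'
      rw [hdn1] at this; norm_num at this
  refine ⟨(d ^ n - 1).natAbs, Int.natAbs_pos.mpr hdn, fun g => ?_⟩
  rcases Int.natAbs_eq (d ^ n - 1) with h' | h'
  · rw [← zpow_natCast, ← h', hkey]
  · rw [← zpow_natCast, ← neg_neg (((d^n-1).natAbs : ℤ)), ← h', zpow_neg, hkey, inv_one]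
end

section
/- Let G be a noncommutative group such that for every positive integer N there exists an element g ∈ G with g^N ≠ e (i.e., G does not have finite exponent). If t ∈ G and d ∈ ℤ satisfy g^d = t g t⁻¹ for every g ∈ G, then d = 1 and t lies in the center of G. -/
theorem stmt_11 {G : Type*} [Group G]
    (hnc : ¬∀ a b : G, a * b = b * a)
    (hexp : ∀ N : ℕ, 0 < N → ∃ g : G, g ^ N ≠ 1)
    (t : G) (d : ℤ) (h : ∀ g : G, g ^ d = t * g * t⁻¹) :
    d = 1 ∧ t ∈ Subgroup.center G := by
  have hmul : ∀ g x : G, (g * x) ^ d = g ^ d * x ^ d := by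
    intro g x
    rw [h, h, h]; group
  -- g^(d-1) commutes with every y^d
  have hcomm : ∀ g y : G, g ^ (d - 1) * y ^ d = y ^ d * g ^ (d - 1) := by
    intro g y
    have e1 : g ^ d * y ^ d = g * (y ^ d * g ^ d) * g⁻¹ := by
      rw [← hmul, ← hmul]
      have : g * y = g * (y * g) * g⁻¹ := by group
      rw [this, conj_zpow]
    have e2 : g ^ (d - 1) = g⁻¹ * g ^ d := by
      rw [zpow_sub_one, ← ((Commute.refl g).zpow_right d).inv_left.eq]
    calc g ^ (d - 1) * y ^ d = g⁻¹ * (g ^ d * y ^ d) := by rw [e2]; group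
      _ = y ^ d * g ^ d * g⁻¹ := by rw [e1]; group
      _ = y ^ d * g ^ (d - 1) := by rw [zpow_sub_one]; group
  -- g^(d-1) is central
  have hcen : ∀ g x : G, g ^ (d - 1) * x = x * g ^ (d - 1) := by
    intro g x
    have hx : (t⁻¹ * x * t) ^ d = x := by rw [h]; group
    rw [← hx]; exact hcomm g _
  -- torsion
  have htor : ∀ g : G, g ^ ((d - 1) * (d - 1)) = 1 := by
    intro g
    have hct : g ^ (d - 1) * t = t * g ^ (d - 1) := hcen g t
    have hfix : (g ^ (d - 1)) ^ d = g ^ (d - 1) := by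
      rw [h (g ^ (d - 1)), ← hct]; group
    calc g ^ ((d - 1) * (d - 1)) = (g ^ (d - 1)) ^ (d - 1) := by rw [zpow_mul]
      _ = (g ^ (d - 1)) ^ d * (g ^ (d - 1))⁻¹ := zpow_sub_one _ _
      _ = 1 := by rw [hfix]; group
  have hd1 : d = 1 := by
    by_contra hd
    have hpos : 0 < (d - 1) * (d - 1) := mul_self_pos.mpr (sub_ne_zero.mpr hd)
    obtain ⟨g, hg⟩ := hexp ((d - 1) * (d - 1)).toNat (by omega)
    apply hg
    rw [← zpow_natCast, Int.toNat_of_nonneg hpos.le, htor]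
  refine ⟨hd1, Subgroup.mem_center_iff.mpr fun g => ?_⟩
  have hg := h g
  rw [hd1, zpow_one] at hg
  calc g * t = (t * g * t⁻¹) * t := by rw [← hg]
    _ = t * g := by group
end
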